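/- Let H be a complex Hilbert space, A : H → H a bounded linear operator, and T : H → H a linear isometry such that TA = AT and T^n → 0 weakly as n → ∞ (⟨T^n φ, ψ⟩ → 0 for all φ, ψ ∈ H). Let V be a closed subspace of H, let P : H → V be the orthogonal projection onto V and Q := I − P, and suppose Q T^n → 0 strongly as n → ∞ (i.e. ‖Q T^n φ‖ → 0 for every φ ∈ H). Define Ã : V → V by Ã := P ∘ A restricted to V. Then W_ess(Ã) = closure(W(Ã)) = closure(W(A)), and the essential norm of Ã as an operator on V satisfies ‖Ã‖_ess = ‖Ã‖ = ‖A‖. -/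

import Mathlib

open scoped ComplexInnerProductSpace
open Filter

section Defs

variable {E : Type*} [NormedAddCommGroup E] [InnerProductSpace ℂ E]

/-- The numerical range `W(A) = {⟨Aψ, ψ⟩ : ‖ψ‖ = 1}` of a bounded linear operator. -/
def numericalRange (A : E →L[ℂ] E) : Set ℂ :=
  {z | ∃ ψ : E, ‖ψ‖ = 1 ∧ z = ⟪A ψ, ψ⟫}

/-- The essential numerical range `W_ess(A) = ⋂_{K compact} closure (W(A + K))`. -/
def essNumericalRange (A : E →L[ℂ] E) : Set ℂ :=
  ⋂ (K : E →L[ℂ] E) (_ : IsCompactOperator ⇑K), closure (numericalRange (A + K))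

/-- The essential norm `‖A‖_ess = inf {‖A − K‖ : K compact}`. -/
noncomputable def essNorm (A : E →L[ℂ] E) : ℝ :=
  sInf {r : ℝ | ∃ K : E →L[ℂ] E, IsCompactOperator ⇑K ∧ r = ‖A - K‖}

end Defs

variable {H : Type*} [NormedAddCommGroup H] [InnerProductSpace ℂ H] [CompleteSpace H]

/-!
For a unit vector `ψ`, the vectors `Tⁿψ` are unit vectors with `⟪A Tⁿψ, Tⁿψ⟫ = ⟪Aψ, ψ⟫` and
`‖A Tⁿψ‖ = ‖Aψ‖` (as `T` is an isometry commuting with `A`); they tend weakly to `0` and their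
distance to `V` tends to `0`. Hence their projections onto `V` form a singular sequence for `Ã`
along which `⟪Ãφ, φ⟫ → ⟪Aψ, ψ⟫` and `‖Ãφ‖ → ‖Aψ‖`. A compact operator `K` sends singular
sequences to null sequences, so `W(A) ⊆ closure W(Ã + K)` and `‖A‖ ≤ ‖Ã - K‖`, while
`W(Ã) ⊆ W(A)` and `‖Ã‖ ≤ ‖A‖` hold for every compression.
-/

open scoped InnerProductSpace Topology

theorem Filter.Tendsto.norm_of_tendsto_norm_sub {α F : Type*} [SeminormedAddCommGroup F]
    {l : Filter α} {a b : α → F} {c : ℝ} (hb : Tendsto (fun i => ‖b i‖) l (𝓝 c))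
    (hab : Tendsto (fun i => ‖a i - b i‖) l (𝓝 0)) : Tendsto (fun i => ‖a i‖) l (𝓝 c) :=
  tendsto_of_tendsto_of_dist hb <| squeeze_zero (fun _ => dist_nonneg)
    (fun _ => (dist_norm_norm_le _ _).trans_eq (norm_sub_rev _ _)) hab

section CompactOperator

variable {𝕜 E : Type*} [RCLike 𝕜] [NormedAddCommGroup E] [InnerProductSpace 𝕜 E] [CompleteSpace E]

-- Along a subsequence `K φ` converges in norm by compactness, and its limit is weakly zero.
theorem IsCompactOperator.tendsto_zero_of_weaklyNull {K : E →L[𝕜] E} (hK : IsCompactOperator K)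
    {φ : ℕ → E} {C : ℝ} (hb : ∀ n, ‖φ n‖ ≤ C)
    (hw : ∀ v, Tendsto (fun n => ⟪φ n, v⟫_𝕜) atTop (𝓝 0)) :
    Tendsto (fun n => K (φ n)) atTop (𝓝 0) := by
  have hKw : ∀ v, Tendsto (fun n => ⟪K (φ n), v⟫_𝕜) atTop (𝓝 0) := fun v => by
    simpa only [ContinuousLinearMap.adjoint_inner_right] using hw (K.adjoint v)
  have hC := (show IsCompactOperator (K : E →ₗ[𝕜] E) from hK).isCompact_closure_image_closedBall C
  refine tendsto_of_subseq_tendsto fun ns hns => ?_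
  obtain ⟨a, -, ms, hms, hlim⟩ := hC.isSeqCompact fun k =>
    subset_closure (Set.mem_image_of_mem _ (mem_closedBall_zero_iff.2 (hb (ns k))))
  have ha : ⟪a, a⟫_𝕜 = 0 :=
    tendsto_nhds_unique (hlim.inner tendsto_const_nhds) ((hKw a).comp (hns.comp hms.tendsto_atTop))
  exact ⟨ms, inner_self_eq_zero.1 ha ▸ hlim⟩

end CompactOperator

section NumericalRange

variable {E : Type*} [NormedAddCommGroup E] [InnerProductSpace ℂ E]

theorem mem_closure_numericalRange_of_tendsto {B : E →L[ℂ] E} {φ : ℕ → E} {z : ℂ}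
    (hφ : Tendsto (fun n => ‖φ n‖) atTop (𝓝 1))
    (hz : Tendsto (fun n => ⟪B (φ n), φ n⟫) atTop (𝓝 z)) :
    z ∈ closure (numericalRange B) := by
  have hr : Tendsto (fun n => ((‖φ n‖ : ℂ)⁻¹ * (‖φ n‖ : ℂ)⁻¹) * ⟪B (φ n), φ n⟫) atTop (𝓝 z) := by
    have h := (Complex.continuous_ofReal.tendsto 1).comp hφ
    simpa using ((h.inv₀ one_ne_zero).mul (h.inv₀ one_ne_zero)).mul hz
  refine mem_closure_of_tendsto hr ?_
  filter_upwards [hφ.eventually_ne one_ne_zero] with n hn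
  refine ⟨(‖φ n‖ : ℂ)⁻¹ • φ n, ?_, ?_⟩
  · rw [norm_smul, norm_inv, Complex.norm_real, norm_norm, inv_mul_cancel₀ hn]
  · rw [map_smul, inner_smul_left, inner_smul_right, map_inv₀, Complex.conj_ofReal]
    ring

theorem norm_inner_apply_self_sub_le (A : E →L[ℂ] E) {x y : E} (hx : ‖x‖ ≤ 1) (hy : ‖y‖ ≤ 1) :
    ‖⟪A x, x⟫ - ⟪A y, y⟫‖ ≤ 2 * ‖A‖ * ‖x - y‖ := by
  have hsplit : ⟪A x, x⟫ - ⟪A y, y⟫ = ⟪A (x - y), x⟫ + ⟪A y, x - y⟫ := by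
    rw [map_sub, inner_sub_left, inner_sub_right]; ring
  calc ‖⟪A x, x⟫ - ⟪A y, y⟫‖ ≤ ‖A (x - y)‖ * ‖x‖ + ‖A y‖ * ‖x - y‖ := by
        rw [hsplit]; exact norm_add_le_of_le (norm_inner_le_norm _ _) (norm_inner_le_norm _ _)
    _ ≤ ‖A‖ * ‖x - y‖ * 1 + ‖A‖ * 1 * ‖x - y‖ := by
        gcongr
        · exact A.le_opNorm _
        · exact A.le_opNorm_of_le hy
    _ = 2 * ‖A‖ * ‖x - y‖ := by ring

end NumericalRange

section SingularSeq

variable {E : Type*} [NormedAddCommGroup E] [InnerProductSpace ℂ E]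

/-- A singular sequence, with the normalisation `‖φ n‖ = 1` relaxed to `‖φ n‖ → 1`. -/
structure IsSingularSeq (φ : ℕ → E) : Prop where
  tendsto_norm : Tendsto (fun n => ‖φ n‖) atTop (𝓝 1)
  weaklyNull : ∀ v, Tendsto (fun n => ⟪φ n, v⟫) atTop (𝓝 0)

namespace IsSingularSeq

theorem orthogonalProjectionOnto {V : Submodule ℂ E} [V.HasOrthogonalProjection] {x : ℕ → E}
    (hx : IsSingularSeq x)
    (hdist : Tendsto (fun n => ‖x n - (V.orthogonalProjectionOnto (x n) : E)‖) atTop (𝓝 0)) :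
    IsSingularSeq fun n => V.orthogonalProjectionOnto (x n) where
  tendsto_norm := hx.tendsto_norm.norm_of_tendsto_norm_sub
    (a := fun n => (V.orthogonalProjectionOnto (x n) : E))
    (by simpa only [norm_sub_rev] using hdist)
  weaklyNull v := by
    simpa only [V.inner_orthogonalProjectionOnto_eq_of_mem_right] using hx.weaklyNull v

variable [CompleteSpace E] {φ : ℕ → E} {B K : E →L[ℂ] E}

theorem tendsto_apply_zero (hφ : IsSingularSeq φ) (hK : IsCompactOperator K) :
    Tendsto (fun n => K (φ n)) atTop (𝓝 0) := by
  obtain ⟨C, hC⟩ := hφ.tendsto_norm.bddAbove_range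
  exact hK.tendsto_zero_of_weaklyNull (fun n => hC ⟨n, rfl⟩) hφ.weaklyNull

theorem mem_closure_numericalRange_add (hφ : IsSingularSeq φ) (hK : IsCompactOperator K) {z : ℂ}
    (hz : Tendsto (fun n => ⟪B (φ n), φ n⟫) atTop (𝓝 z)) :
    z ∈ closure (numericalRange (B + K)) := by
  have hKφ : Tendsto (fun n => ⟪K (φ n), φ n⟫) atTop (𝓝 0) := by
    refine squeeze_zero_norm (fun n => norm_inner_le_norm _ _) ?_
    simpa using (hφ.tendsto_apply_zero hK).norm.mul hφ.tendsto_norm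
  refine mem_closure_numericalRange_of_tendsto hφ.tendsto_norm ?_
  simpa only [add_apply, inner_add_left, add_zero] using hz.add hKφ

theorem le_norm_sub (hφ : IsSingularSeq φ) (hK : IsCompactOperator K) {c : ℝ}
    (hc : Tendsto (fun n => ‖B (φ n)‖) atTop (𝓝 c)) : c ≤ ‖B - K‖ := by
  have hlow : Tendsto (fun n => ‖B (φ n)‖ - ‖K (φ n)‖) atTop (𝓝 c) := by
    simpa using hc.sub (hφ.tendsto_apply_zero hK).norm
  have hup : Tendsto (fun n => ‖B - K‖ * ‖φ n‖) atTop (𝓝 ‖B - K‖) := by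
    simpa using hφ.tendsto_norm.const_mul ‖B - K‖
  refine le_of_tendsto_of_tendsto' hlow hup fun n => ?_
  calc ‖B (φ n)‖ - ‖K (φ n)‖ ≤ ‖(B - K) (φ n)‖ := norm_sub_norm_le _ _
    _ ≤ ‖B - K‖ * ‖φ n‖ := (B - K).le_opNorm _

end IsSingularSeq

end SingularSeq

section Essential

variable {E : Type*} [NormedAddCommGroup E] [InnerProductSpace ℂ E] {B : E →L[ℂ] E}

theorem essNumericalRange_subset_closure_numericalRange (B : E →L[ℂ] E) :
    essNumericalRange B ⊆ closure (numericalRange B) :=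
  calc essNumericalRange B ⊆ closure (numericalRange (B + 0)) :=
        Set.iInter₂_subset (κ := fun K : E →L[ℂ] E => IsCompactOperator K) 0 isCompactOperator_zero
    _ = closure (numericalRange B) := by rw [add_zero]

theorem closure_subset_essNumericalRange {S : Set ℂ}
    (h : ∀ K : E →L[ℂ] E, IsCompactOperator K → S ⊆ closure (numericalRange (B + K))) :
    closure S ⊆ essNumericalRange B :=
  Set.subset_iInter₂ fun K hK => closure_minimal (h K hK) isClosed_closure

theorem essNorm_le_norm (B : E →L[ℂ] E) : essNorm B ≤ ‖B‖ :=
  csInf_le ⟨0, by rintro _ ⟨K, -, rfl⟩; exact norm_nonneg _⟩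
    ⟨0, isCompactOperator_zero, by rw [sub_zero]⟩

theorem le_essNorm {c : ℝ} (h : ∀ K : E →L[ℂ] E, IsCompactOperator K → c ≤ ‖B - K‖) :
    c ≤ essNorm B :=
  le_csInf ⟨_, 0, isCompactOperator_zero, rfl⟩ fun _ ⟨K, hK, hr⟩ => hr ▸ h K hK

end Essential

section Compression

variable {E : Type*} [NormedAddCommGroup E] [InnerProductSpace ℂ E]
  (V : Submodule ℂ E) [V.HasOrthogonalProjection] (A : E →L[ℂ] E)

noncomputable def compression : V →L[ℂ] V :=
  V.orthogonalProjectionOnto.comp (A.comp V.subtypeL)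

theorem inner_compression_apply_self (v : V) : ⟪compression V A v, v⟫ = ⟪A v, v⟫ :=
  V.inner_orthogonalProjectionOnto_eq_of_mem_right v (A v)

theorem numericalRange_compression_subset :
    numericalRange (compression V A) ⊆ numericalRange A := by
  rintro _ ⟨v, hv, rfl⟩
  exact ⟨v, hv, inner_compression_apply_self V A v⟩

theorem norm_compression_le : ‖compression V A‖ ≤ ‖A‖ :=
  (compression V A).opNorm_le_bound (norm_nonneg A) fun v =>
    (V.norm_orthogonalProjectionOnto_apply_le _).trans (A.le_opNorm v)

variable {V}

theorem norm_inner_compression_sub_le {x : E} (hx : ‖x‖ ≤ 1) :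
    ‖⟪compression V A (V.orthogonalProjectionOnto x), V.orthogonalProjectionOnto x⟫ - ⟪A x, x⟫‖ ≤
      2 * ‖A‖ * ‖x - V.orthogonalProjectionOnto x‖ := by
  rw [inner_compression_apply_self, norm_sub_rev x]
  exact norm_inner_apply_self_sub_le A ((V.norm_orthogonalProjectionOnto_apply_le x).trans hx) hx

theorem norm_compression_sub_le (x : E) :
    ‖(compression V A (V.orthogonalProjectionOnto x) : E) - A x‖ ≤
      ‖A‖ * ‖x - V.orthogonalProjectionOnto x‖ + ‖A x - V.orthogonalProjectionOnto (A x)‖ := by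
  set P := V.orthogonalProjectionOnto
  have hsplit :
      (compression V A (P x) : E) - A x = (P (A (P x - x)) : E) + ((P (A x) : E) - A x) := by
    simp only [compression, ContinuousLinearMap.comp_apply, Submodule.subtypeL_apply, map_sub,
      Submodule.coe_sub, P]
    abel
  rw [hsplit]
  refine norm_add_le_of_le ((V.norm_orthogonalProjectionOnto_apply_le _).trans ?_)
    (norm_sub_rev _ _).le
  exact (A.le_opNorm _).trans_eq (by rw [norm_sub_rev])

end Compression

section Isometry

variable {E : Type*} [NormedAddCommGroup E] [InnerProductSpace ℂ E] {T : E →L[ℂ] E}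

theorem inner_pow_apply_pow_apply (hiso : ∀ x y, ⟪T x, T y⟫ = ⟪x, y⟫) (n : ℕ) (x y : E) :
    ⟪(T ^ n) x, (T ^ n) y⟫ = ⟪x, y⟫ := by
  induction n generalizing x y with
  | zero => rfl
  | succ n ih => exact (ih (T x) (T y)).trans (hiso x y)

theorem norm_pow_apply (hiso : ∀ x y, ⟪T x, T y⟫ = ⟪x, y⟫) (n : ℕ) (x : E) :
    ‖(T ^ n) x‖ = ‖x‖ := by
  rw [norm_eq_sqrt_re_inner (𝕜 := ℂ), inner_pow_apply_pow_apply hiso, ← norm_eq_sqrt_re_inner]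

theorem exists_isSingularSeq_compression {A : E →L[ℂ] E} (hiso : ∀ x y, ⟪T x, T y⟫ = ⟪x, y⟫)
    (hcomm : Commute T A)
    (hweak : ∀ φ ψ : E, Tendsto (fun n : ℕ => ⟪(T ^ n) φ, ψ⟫) atTop (𝓝 0))
    (V : Submodule ℂ E) [V.HasOrthogonalProjection]
    (hQ : ∀ φ : E, Tendsto
      (fun n : ℕ => ‖(T ^ n) φ - ((V.orthogonalProjectionOnto ((T ^ n) φ) : V) : E)‖) atTop (𝓝 0))
    {ψ : E} (hψ : ‖ψ‖ = 1) :
    ∃ φ : ℕ → V, IsSingularSeq φ ∧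
      Tendsto (fun n => ⟪compression V A (φ n), φ n⟫) atTop (𝓝 ⟪A ψ, ψ⟫) ∧
      Tendsto (fun n => ‖compression V A (φ n)‖) atTop (𝓝 ‖A ψ‖) := by
  have hsing : IsSingularSeq fun n => (T ^ n) ψ :=
    ⟨by simp only [norm_pow_apply hiso, hψ, tendsto_const_nhds], hweak ψ⟩
  have hA : ∀ n, A ((T ^ n) ψ) = (T ^ n) (A ψ) := fun n =>
    (congrArg (· ψ) ((hcomm.pow_left n).eq)).symm
  refine ⟨_, hsing.orthogonalProjectionOnto (V := V) (hQ ψ), ?_, ?_⟩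
  · rw [tendsto_iff_norm_sub_tendsto_zero]
    refine squeeze_zero (fun _ => norm_nonneg _) (fun n => ?_)
      (by simpa only [mul_zero] using (hQ ψ).const_mul (2 * ‖A‖))
    rw [← inner_pow_apply_pow_apply hiso n, ← hA]
    exact norm_inner_compression_sub_le (V := V) A ((norm_pow_apply hiso n ψ).trans hψ).le
  · have hAx : Tendsto (fun n => ‖A ((T ^ n) ψ)‖) atTop (𝓝 ‖A ψ‖) := by
      simp only [hA, norm_pow_apply hiso, tendsto_const_nhds]
    refine hAx.norm_of_tendsto_norm_sub (a := fun n => (compression V A _ : E))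
      (squeeze_zero (fun _ => norm_nonneg _) (fun n => norm_compression_sub_le A _) ?_)
    simpa only [hA, mul_zero, add_zero] using ((hQ ψ).const_mul ‖A‖).add (hQ (A ψ))

end Isometry

/-- Suppose `T` is an isometry commuting with `A`, `T^n → 0` weakly, `V` is a closed
subspace of `H`, and `Q T^n → 0` strongly, where `Q = I − P` and `P` is the orthogonal
projection onto `V`. Then, for `Ã := P ∘ A` restricted to `V` (as an operator on `V`),
`W_ess(Ã) = closure (W(Ã)) = closure (W(A))` and `‖Ã‖_ess = ‖Ã‖ = ‖A‖`. -/
theorem essNumericalRange_compression_eq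
    (A T : H →L[ℂ] H)
    (hiso : ∀ x y : H, ⟪T x, T y⟫ = ⟪x, y⟫)
    (hcomm : T.comp A = A.comp T)
    (hweak : ∀ φ ψ : H, Tendsto (fun n : ℕ => ⟪(T ^ n) φ, ψ⟫) atTop (nhds (0 : ℂ)))
    (V : Submodule ℂ H) [CompleteSpace V]
    (hQ : ∀ φ : H, Tendsto
      (fun n : ℕ => ‖(T ^ n) φ - ((V.orthogonalProjectionOnto ((T ^ n) φ) : V) : H)‖)
      atTop (nhds (0 : ℝ))) :
    essNumericalRange (V.orthogonalProjectionOnto.comp (A.comp V.subtypeL)) =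
        closure (numericalRange (V.orthogonalProjectionOnto.comp (A.comp V.subtypeL))) ∧
    closure (numericalRange (V.orthogonalProjectionOnto.comp (A.comp V.subtypeL))) =
        closure (numericalRange A) ∧
    essNorm (V.orthogonalProjectionOnto.comp (A.comp V.subtypeL)) =
        ‖V.orthogonalProjectionOnto.comp (A.comp V.subtypeL)‖ ∧
    ‖V.orthogonalProjectionOnto.comp (A.comp V.subtypeL)‖ = ‖A‖ := by
  have hÃ : V.orthogonalProjectionOnto.comp (A.comp V.subtypeL) = compression V A := rfl
  rw [hÃ]
  have hW : ∀ K : V →L[ℂ] V, IsCompactOperator K →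
      numericalRange A ⊆ closure (numericalRange (compression V A + K)) := by
    rintro K hK _ ⟨ψ, hψ, rfl⟩
    obtain ⟨φ, hφ, hval, -⟩ := exists_isSingularSeq_compression hiso hcomm hweak V hQ hψ
    exact hφ.mem_closure_numericalRange_add hK hval
  have hN : ∀ K : V →L[ℂ] V, IsCompactOperator K → ‖A‖ ≤ ‖compression V A - K‖ :=
    fun K hK => A.opNorm_le_of_unit_norm (ContinuousLinearMap.opNorm_nonneg _) fun ψ hψ => by
      obtain ⟨φ, hφ, -, hnorm⟩ := exists_isSingularSeq_compression hiso hcomm hweak V hQ hψ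
      exact hφ.le_norm_sub hK hnorm
  have hclosure : closure (numericalRange (compression V A)) = closure (numericalRange A) :=
    (closure_mono (numericalRange_compression_subset V A)).antisymm
      (closure_minimal (by simpa using hW 0 isCompactOperator_zero) isClosed_closure)
  have hnorm : ‖compression V A‖ = ‖A‖ :=
    (norm_compression_le V A).antisymm (by simpa using hN 0 isCompactOperator_zero)
  refine ⟨(essNumericalRange_subset_closure_numericalRange _).antisymm ?_, hclosure,
    (essNorm_le_norm _).antisymm (hnorm ▸ le_essNorm hN), hnorm⟩
  exact hclosure ▸ closure_subset_essNumericalRange hW
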